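/- For |q| < 1, |z| < 1 and a ∈ ℂ, the q-binomial theorem holds: (az;q)_∞ / (z;q)_∞ = Σ_{j≥0} ((a;q)_j / (q;q)_j) z^j, where the series converges absolutely. -/

import Mathlib

/-! Write `S(w) = ∑ (a;q)_j / (q;q)_j w^j`. The ratio of consecutive coefficients,
`(1 - a q^j) / (1 - q^(j+1))`, tends to `1`, so `S` converges absolutely on the unit disc, and
comparing coefficients gives `(1 - w) S(w) = (1 - a w) S(q w)`. Iterating,
`S(z) (z;q)_n = (az;q)_n S(q^n z)`. As `n → ∞`, `S(q^n z) → S(0) = 1` by dominated convergence,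
the finite products tend to the infinite ones, and `(z;q)_∞ ≠ 0` because `|z| < 1`. -/

open Filter Topology

noncomputable def qPoch (z q : ℂ) (n : ℕ) : ℂ := ∏ i ∈ Finset.range n, (1 - z * q ^ i)

lemma qPoch_succ (z q : ℂ) (n : ℕ) : qPoch z q (n + 1) = qPoch z q n * (1 - z * q ^ n) :=
  Finset.prod_range_succ _ _

lemma one_sub_ne_zero_of_norm_lt_one {R : Type*} [SeminormedRing R] [NormOneClass R] {x : R}
    (hx : ‖x‖ < 1) : 1 - x ≠ 0 :=
  sub_ne_zero.mpr fun h ↦ by simp [← h] at hx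

section InfiniteProduct

variable {q : ℂ}

lemma norm_pow_mul_le (hq : ‖q‖ ≤ 1) (w : ℂ) (n : ℕ) : ‖q ^ n * w‖ ≤ ‖w‖ := by
  rw [norm_mul, norm_pow]
  exact mul_le_of_le_one_left (norm_nonneg w) (pow_le_one₀ (norm_nonneg q) hq)

lemma summable_norm_mul_pow (w : ℂ) (hq : ‖q‖ < 1) : Summable fun l : ℕ ↦ ‖w * q ^ l‖ := by
  simpa [norm_mul, norm_pow] using
    (summable_geometric_of_lt_one (norm_nonneg q) hq).mul_left ‖w‖

lemma hasProd_one_sub_mul_pow (w : ℂ) (hq : ‖q‖ < 1) :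
    HasProd (fun l : ℕ ↦ 1 - w * q ^ l) (∏' l : ℕ, (1 - w * q ^ l)) := by
  simpa [sub_eq_add_neg] using
    (multipliable_one_add_of_summable (f := fun l : ℕ ↦ -(w * q ^ l))
      (by simpa using summable_norm_mul_pow w hq)).hasProd

lemma tprod_one_sub_mul_pow_ne_zero {w : ℂ} (hw : ‖w‖ < 1) (hq : ‖q‖ < 1) :
    ∏' l : ℕ, (1 - w * q ^ l) ≠ 0 := by
  simpa [sub_eq_add_neg] using
    tprod_one_add_ne_zero_of_summable (f := fun l : ℕ ↦ -(w * q ^ l))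
      (fun l ↦ by
        rw [← sub_eq_add_neg, mul_comm]
        exact one_sub_ne_zero_of_norm_lt_one ((norm_pow_mul_le hq.le w l).trans_lt hw))
      (by simpa using summable_norm_mul_pow w hq)

end InfiniteProduct

noncomputable def qBinomialSeries (a q w : ℂ) : ℂ := ∑' j : ℕ, qPoch a q j / qPoch q q j * w ^ j

section qBinomialSeries

variable {a q w : ℂ}

lemma qPoch_div_qPoch_succ (a q : ℂ) (j : ℕ) :
    qPoch a q (j + 1) / qPoch q q (j + 1) =
      qPoch a q j / qPoch q q j * ((1 - a * q ^ j) / (1 - q ^ (j + 1))) := by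
  -- true even where a denominator vanishes, since `x / 0 = 0` on both sides
  rw [qPoch_succ, qPoch_succ, mul_div_mul_comm, ← pow_succ']

lemma tendsto_qBinomial_coeff_ratio (a : ℂ) (hq : ‖q‖ < 1) :
    Tendsto (fun j : ℕ ↦ (1 - a * q ^ j) / (1 - q ^ (j + 1))) atTop (𝓝 1) := by
  have h0 : Tendsto (fun j : ℕ ↦ q ^ j) atTop (𝓝 0) :=
    tendsto_pow_atTop_nhds_zero_of_norm_lt_one hq
  have h1 : Tendsto (fun j : ℕ ↦ q ^ (j + 1)) atTop (𝓝 0) := h0.comp (tendsto_add_atTop_nat 1)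
  convert ((h0.const_mul a).const_sub 1).div (h1.const_sub 1) (by simp) using 2 <;> simp

lemma summable_norm_qBinomial (a : ℂ) (hq : ‖q‖ < 1) (hw : ‖w‖ < 1) :
    Summable fun j : ℕ ↦ ‖qPoch a q j / qPoch q q j * w ^ j‖ := by
  have hρ : Tendsto (fun j : ℕ ↦ ‖(1 - a * q ^ j) / (1 - q ^ (j + 1))‖ * ‖w‖) atTop
      (𝓝 ‖w‖) := by
    simpa using ((tendsto_qBinomial_coeff_ratio a hq).norm).mul_const ‖w‖
  -- this form of the ratio test also covers the terminating case `a = q⁻ᵏ`, where terms vanish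
  refine summable_of_ratio_norm_eventually_le (r := (1 + ‖w‖) / 2) (by linarith) ?_
  filter_upwards [hρ.eventually_le_const (by linarith : ‖w‖ < (1 + ‖w‖) / 2)] with j hj
  rw [qPoch_div_qPoch_succ, norm_norm, norm_norm, mul_comm ((1 + ‖w‖) / 2)]
  calc _ = ‖qPoch a q j / qPoch q q j * w ^ j‖ *
        (‖(1 - a * q ^ j) / (1 - q ^ (j + 1))‖ * ‖w‖) := by simp only [norm_mul, pow_succ]; ring
    _ ≤ _ := by gcongr

lemma hasSum_qBinomialSeries (a : ℂ) (hq : ‖q‖ < 1) (hw : ‖w‖ < 1) :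
    HasSum (fun j : ℕ ↦ qPoch a q j / qPoch q q j * w ^ j) (qBinomialSeries a q w) :=
  (summable_norm_qBinomial a hq hw).of_norm.hasSum

lemma one_sub_mul_qBinomialSeries (hq : ‖q‖ < 1) (hw : ‖w‖ < 1) :
    (1 - w) * qBinomialSeries a q w = (1 - a * w) * qBinomialSeries a q (q * w) := by
  set c : ℕ → ℂ := fun j ↦ qPoch a q j / qPoch q q j
  have hS := hasSum_qBinomialSeries a hq hw
  have hSq := hasSum_qBinomialSeries a hq (w := q * w)
    (by rw [norm_mul]; exact mul_lt_one_of_nonneg_of_lt_one_left (norm_nonneg q) hq hw.le)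
  have hdiff : HasSum (fun j ↦ c j * (1 - q ^ j) * w ^ j)
      (qBinomialSeries a q w - qBinomialSeries a q (q * w)) :=
    (hS.sub hSq).congr_fun fun j ↦ by simp only [c, mul_pow]; ring
  have hshift : HasSum (fun j ↦ c (j + 1) * (1 - q ^ (j + 1)) * w ^ (j + 1))
      (w * qBinomialSeries a q w - a * w * qBinomialSeries a q (q * w)) := by
    refine ((hS.mul_left w).sub (hSq.mul_left (a * w))).congr_fun fun j ↦ ?_
    have hne : 1 - q ^ (j + 1) ≠ 0 := one_sub_ne_zero_of_norm_lt_one <| by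
      rw [norm_pow]; exact pow_lt_one₀ (norm_nonneg q) hq j.succ_ne_zero
    simp only [c, qPoch_div_qPoch_succ, mul_pow]
    field_simp
    ring
  have hdiff_shift := (hasSum_nat_add_iff' 1).mpr hdiff
  simp only [Finset.range_one, Finset.sum_singleton, pow_zero, sub_self, mul_zero, mul_one,
    sub_zero] at hdiff_shift
  linear_combination hdiff_shift.unique hshift

lemma qBinomialSeries_mul_qPoch (hq : ‖q‖ < 1) (hw : ‖w‖ < 1) (n : ℕ) :
    qBinomialSeries a q w * qPoch w q n = qPoch (a * w) q n * qBinomialSeries a q (q ^ n * w) := by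
  induction n with
  | zero => simp [qPoch]
  | succ n ih =>
    have hfun := one_sub_mul_qBinomialSeries (a := a) hq ((norm_pow_mul_le hq.le w n).trans_lt hw)
    rw [qPoch_succ, qPoch_succ, ← mul_assoc, ih, pow_succ', mul_assoc q]
    linear_combination qPoch (a * w) q n * hfun

lemma tendsto_qBinomialSeries_pow_mul (a : ℂ) (hq : ‖q‖ < 1) (hw : ‖w‖ < 1) :
    Tendsto (fun n : ℕ ↦ qBinomialSeries a q (q ^ n * w)) atTop (𝓝 1) := by
  have hlim : Tendsto (fun n : ℕ ↦ q ^ n * w) atTop (𝓝 0) := by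
    simpa using (tendsto_pow_atTop_nhds_zero_of_norm_lt_one hq).mul_const w
  have hS0 : ∑' j : ℕ, qPoch a q j / qPoch q q j * 0 ^ j = 1 := by
    rw [tsum_eq_single 0 fun j hj ↦ by simp [hj]]
    simp [qPoch]
  rw [← hS0]
  refine tendsto_tsum_of_dominated_convergence (summable_norm_qBinomial a hq hw)
    (fun j ↦ (hlim.pow j).const_mul _) (Eventually.of_forall fun n j ↦ ?_)
  rw [norm_mul, norm_mul, norm_pow, norm_pow]
  gcongr
  exact norm_pow_mul_le hq.le w n

end qBinomialSeries

theorem stmt19 (q z a : ℂ) (hq : ‖q‖ < 1) (hz : ‖z‖ < 1) :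
    (∏' l : ℕ, (1 - a * z * q ^ l)) / (∏' l : ℕ, (1 - z * q ^ l)) =
        ∑' j : ℕ, qPoch a q j / qPoch q q j * z ^ j ∧
      Summable (fun j : ℕ => ‖qPoch a q j / qPoch q q j * z ^ j‖) := by
  refine ⟨?_, summable_norm_qBinomial a hq hz⟩
  have hlhs := ((hasProd_one_sub_mul_pow z hq).tendsto_prod_nat).const_mul (qBinomialSeries a q z)
  have hrhs := ((hasProd_one_sub_mul_pow (a * z) hq).tendsto_prod_nat).mul
    (tendsto_qBinomialSeries_pow_mul a hq hz)
  rw [mul_one] at hrhs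
  rw [div_eq_iff (tprod_one_sub_mul_pow_ne_zero hz hq)]
  exact (tendsto_nhds_unique (hlhs.congr (qBinomialSeries_mul_qPoch hq hz)) hrhs).symm
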